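/- Let F and R be independent Poisson random variables with means f and r respectively, where f > r > 0, and let 0 < ε < 1/2. Then Pr[F − R ≤ (1−2ε)(f−r)] < 2 exp(−ε²(f−r)²/(2f)). -/

import Mathlib

open ProbabilityTheory MeasureTheory
open scoped NNReal ENNReal

/-- MGF of the Poisson distribution, as a Lebesgue integral. -/
lemma poisson_lintegral_exp (r : ℝ≥0) (t : ℝ) :
    ∫⁻ n, ENNReal.ofReal (Real.exp (t * n)) ∂(poissonMeasure r)
      = ENNReal.ofReal (Real.exp ((r : ℝ) * (Real.exp t - 1))) := by
  rw [lintegral_countable']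
  have hsingle : ∀ n : ℕ, poissonMeasure r {n} = ENNReal.ofReal (poissonPMFReal r n) :=
    fun n => by
      rw [poissonMeasure_singleton]
      rfl
  have hterm : ∀ n : ℕ, ENNReal.ofReal (Real.exp (t * n)) * poissonMeasure r {n}
      = ENNReal.ofReal (Real.exp (t * n) * poissonPMFReal r n) := fun n => by
    rw [hsingle n, ← ENNReal.ofReal_mul (Real.exp_nonneg _)]
  simp_rw [hterm]
  have hnonneg : ∀ n : ℕ, 0 ≤ Real.exp (t * n) * poissonPMFReal r n :=
    fun n => mul_nonneg (Real.exp_nonneg _) poissonPMFReal_nonneg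
  have hhs : HasSum (fun n : ℕ => Real.exp (t * n) * poissonPMFReal r n)
      (Real.exp ((r : ℝ) * (Real.exp t - 1))) := by
    have h1 : HasSum (fun n : ℕ => ((r : ℝ) * Real.exp t) ^ n / n.factorial)
        (Real.exp ((r : ℝ) * Real.exp t)) := by
      rw [Real.exp_eq_exp_ℝ]
      exact NormedSpace.expSeries_div_hasSum_exp _
    have h2 := h1.mul_left (Real.exp (-(r : ℝ)))
    have heq : (fun n : ℕ => Real.exp (-(r : ℝ)) * (((r : ℝ) * Real.exp t) ^ n / n.factorial))
        = fun n : ℕ => Real.exp (t * n) * poissonPMFReal r n := by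
      ext n
      rw [poissonPMFReal, mul_pow, mul_comm t (n : ℝ), Real.exp_nat_mul]
      push_cast
      ring
    rw [heq] at h2
    have : Real.exp (-(r : ℝ)) * Real.exp ((r : ℝ) * Real.exp t)
        = Real.exp ((r : ℝ) * (Real.exp t - 1)) := by
      rw [← Real.exp_add]; ring_nf
    rwa [this] at h2
  rw [← hhs.tsum_eq, ENNReal.ofReal_tsum_of_nonneg hnonneg hhs.summable]

set_option maxHeartbeats 1000000 in
/-- If `F` and `R` are independent Poisson random variables with means `f > r > 0` and
`0 < ε < 1/2`, then `Pr[F - R ≤ (1 - 2ε)(f - r)] < 2 exp(-ε²(f-r)²/(2f))`. -/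
theorem poisson_difference_bound
    {Ω : Type*} [MeasurableSpace Ω] (μ : Measure Ω) [IsProbabilityMeasure μ]
    (f r : NNReal) (hr : 0 < r) (hrf : r < f)
    (ε : ℝ) (hε0 : 0 < ε) (hε1 : ε < 1 / 2)
    (F R : Ω → ℕ) (hF : Measurable F) (hR : Measurable R)
    (hindep : IndepFun F R μ)
    (hlawF : μ.map F = poissonMeasure f) (hlawR : μ.map R = poissonMeasure r) :
    (μ {ω | ((F ω : ℝ) - (R ω : ℝ)) ≤ (1 - 2 * ε) * ((f : ℝ) - (r : ℝ))}).toReal <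
      2 * Real.exp (-ε ^ 2 * ((f : ℝ) - (r : ℝ)) ^ 2 / (2 * (f : ℝ))) := by
  set d : ℝ := (f : ℝ) - (r : ℝ) with hd
  have hrpos : (0 : ℝ) < r := by exact_mod_cast hr
  have hfpos : (0 : ℝ) < f := lt_trans hrpos hrf
  have hdpos : (0 : ℝ) < d := sub_pos.mpr hrf
  have hdf : d < (f : ℝ) := by rw [hd]; linarith
  set l : ℝ := ε * d / (f : ℝ) with hl
  have hlpos : 0 < l := by positivity
  have hl1 : l < 1 / 2 := by
    rw [hl, div_lt_iff₀ hfpos]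
    nlinarith
  set a : ℝ := (1 - 2 * ε) * d with ha
  -- the exponential moment functions
  set X : Ω → ℝ≥0∞ := fun ω => ENNReal.ofReal (Real.exp (-l * F ω)) with hX
  set Y : Ω → ℝ≥0∞ := fun ω => ENNReal.ofReal (Real.exp (l * R ω)) with hY
  have hφmeas : ∀ t : ℝ, Measurable (fun n : ℕ => ENNReal.ofReal (Real.exp (t * n))) :=
    fun t => measurable_from_nat
  have hXmeas : Measurable X := (hφmeas (-l)).comp hF
  have hYmeas : Measurable Y := (hφmeas l).comp hR
  -- step 1: Markov
  set c : ℝ≥0∞ := ENNReal.ofReal (Real.exp (-l * a)) with hc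
  have hc0 : c ≠ 0 := by
    simp [hc, ENNReal.ofReal_pos, Real.exp_pos]
  have hctop : c ≠ ⊤ := ENNReal.ofReal_ne_top
  have hsub : {ω | ((F ω : ℝ) - (R ω : ℝ)) ≤ a} ⊆ {ω | c ≤ X ω * Y ω} := by
    intro ω hω
    simp only [Set.mem_setOf_eq] at hω ⊢
    rw [hX, hY, hc, ← ENNReal.ofReal_mul (Real.exp_nonneg _), ← Real.exp_add]
    apply ENNReal.ofReal_le_ofReal
    apply Real.exp_le_exp.mpr
    nlinarith
  have hmarkov : c * μ {ω | ((F ω : ℝ) - (R ω : ℝ)) ≤ a} ≤ ∫⁻ ω, X ω * Y ω ∂μ := by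
    calc c * μ {ω | ((F ω : ℝ) - (R ω : ℝ)) ≤ a}
        ≤ c * μ {ω | c ≤ X ω * Y ω} := by
          exact mul_le_mul_right (measure_mono hsub) c
      _ ≤ ∫⁻ ω, X ω * Y ω ∂μ :=
          mul_meas_ge_le_lintegral₀ (hXmeas.mul hYmeas).aemeasurable c
  -- step 2: independence
  have hindXY : IndepFun X Y μ := hindep.comp (hφmeas (-l)) (hφmeas l)
  have hprod : ∫⁻ ω, X ω * Y ω ∂μ = (∫⁻ ω, X ω ∂μ) * ∫⁻ ω, Y ω ∂μ :=
    lintegral_mul_eq_lintegral_mul_lintegral_of_indepFun'' hXmeas.aemeasurable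
      hYmeas.aemeasurable hindXY
  -- step 3: compute each via the Poisson mgf
  have hXint : ∫⁻ ω, X ω ∂μ = ENNReal.ofReal (Real.exp ((f : ℝ) * (Real.exp (-l) - 1))) := by
    rw [hX]
    have : ∫⁻ ω, ENNReal.ofReal (Real.exp (-l * F ω)) ∂μ
        = ∫⁻ n, ENNReal.ofReal (Real.exp (-l * n)) ∂(μ.map F) :=
      (lintegral_map (hφmeas (-l)) hF).symm
    rw [this, hlawF, poisson_lintegral_exp]
  have hYint : ∫⁻ ω, Y ω ∂μ = ENNReal.ofReal (Real.exp ((r : ℝ) * (Real.exp l - 1))) := by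
    rw [hY]
    have : ∫⁻ ω, ENNReal.ofReal (Real.exp (l * R ω)) ∂μ
        = ∫⁻ n, ENNReal.ofReal (Real.exp (l * n)) ∂(μ.map R) :=
      (lintegral_map (hφmeas l) hR).symm
    rw [this, hlawR, poisson_lintegral_exp]
  -- combined bound
  set B : ℝ := Real.exp (l * a + (f : ℝ) * (Real.exp (-l) - 1) + (r : ℝ) * (Real.exp l - 1))
    with hB
  have hkey : μ {ω | ((F ω : ℝ) - (R ω : ℝ)) ≤ a} ≤ ENNReal.ofReal B := by
    have := hmarkov.trans_eq (hprod.trans (by rw [hXint, hYint]))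
    rw [mul_comm] at this
    rw [← ENNReal.le_div_iff_mul_le (Or.inl hc0) (Or.inl hctop)] at this
    refine this.trans ?_
    rw [hc, ENNReal.div_eq_inv_mul, ← ENNReal.ofReal_inv_of_pos (Real.exp_pos _),
      ← Real.exp_neg, ← ENNReal.ofReal_mul (Real.exp_nonneg _),
      ← ENNReal.ofReal_mul (by positivity), ← Real.exp_add, ← Real.exp_add, hB]
    apply ENNReal.ofReal_le_ofReal
    exact Real.exp_le_exp.mpr (le_of_eq (by ring))
  -- step 4: the analytic estimate
  have hBle : B ≤ Real.exp (-ε ^ 2 * d ^ 2 / (2 * (f : ℝ))) := by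
    rw [hB]
    clear_value B X Y c
    clear hsub hmarkov hindXY hprod hXint hYint hkey hB hX hY hc hXmeas hYmeas hφmeas
    clear_value a l d
    apply Real.exp_le_exp.mpr
    have hl1' : |l| ≤ 1 := by rw [abs_of_pos hlpos]; linarith
    have hl1'' : |(-l)| ≤ 1 := by rw [abs_neg]; exact hl1'
    have hb1 := Real.exp_bound hl1'' (n := 2) (by norm_num)
    have hb2 := Real.exp_bound hl1' (n := 2) (by norm_num)
    have hs : ∀ x : ℝ, ∑ m ∈ Finset.range 2, x ^ m / m.factorial = 1 + x := by
      intro x; simp [Finset.sum_range_succ]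
    rw [hs] at hb1 hb2
    have hab1 : Real.exp (-l) ≤ 1 + (-l) + (3 / 4) * l ^ 2 := by
      have := (abs_le.mp hb1).2
      have habs : |(-l)| ^ 2 * ((2 : ℕ).succ / ((2 : ℕ).factorial * 2) : ℝ) = (3/4) * l ^ 2 := by
        rw [abs_neg, abs_of_pos hlpos]
        norm_num [Nat.factorial]
        ring
      linarith [habs ▸ this]
    have hab2 : Real.exp l ≤ 1 + l + (3 / 4) * l ^ 2 := by
      have := (abs_le.mp hb2).2
      have habs : |l| ^ 2 * ((2 : ℕ).succ / ((2 : ℕ).factorial * 2) : ℝ) = (3/4) * l ^ 2 := by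
        rw [abs_of_pos hlpos]
        norm_num [Nat.factorial]
        ring
      linarith [habs ▸ this]
    have hld : l * (f : ℝ) = ε * d := by
      rw [hl]; field_simp
    have hrf' : (r : ℝ) ≤ (f : ℝ) := le_of_lt hrf
    -- l*a + f*(e^{-l}-1) + r*(e^l-1) ≤ l*a - l*f + l*r + (3/4)l²(f+r) = -2εld + (3/4)l²(f+r)
    have h1 : l * a + (f : ℝ) * (Real.exp (-l) - 1) + (r : ℝ) * (Real.exp l - 1)
        ≤ -2 * ε * l * d + (3 / 4) * l ^ 2 * ((f : ℝ) + (r : ℝ)) := by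
      have e1 : (f : ℝ) * (Real.exp (-l) - 1) ≤ -(l * (f : ℝ)) + (3/4) * l ^ 2 * (f : ℝ) := by
        nlinarith [hab1, hfpos.le]
      have e2 : (r : ℝ) * (Real.exp l - 1) ≤ l * (r : ℝ) + (3/4) * l ^ 2 * (r : ℝ) := by
        nlinarith [hab2, hrpos.le]
      have h3 : l * a = l * d - 2 * ε * l * d := by rw [ha]; ring
      have h4 : l * d = l * (f : ℝ) - l * (r : ℝ) := by rw [hd]; ring
      have h5 : (3/4) * l ^ 2 * ((f : ℝ) + (r : ℝ))
          = (3/4) * l ^ 2 * (f : ℝ) + (3/4) * l ^ 2 * (r : ℝ) := by ring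
      linarith
    refine h1.trans ?_
    have h2 : -2 * ε * l * d + (3 / 4) * l ^ 2 * ((f : ℝ) + (r : ℝ))
        ≤ -2 * ε * l * d + (3 / 2) * l ^ 2 * (f : ℝ) := by nlinarith [sq_nonneg l]
    refine h2.trans (le_of_eq ?_)
    rw [hl]
    field_simp
    ring
  -- finish
  have hμfin : μ {ω | ((F ω : ℝ) - (R ω : ℝ)) ≤ a} ≠ ⊤ := measure_ne_top μ _
  have htoReal : (μ {ω | ((F ω : ℝ) - (R ω : ℝ)) ≤ a}).toReal ≤ B := by
    have := ENNReal.toReal_mono ENNReal.ofReal_ne_top hkey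
    rwa [ENNReal.toReal_ofReal (Real.exp_nonneg _)] at this
  calc (μ {ω | ((F ω : ℝ) - (R ω : ℝ)) ≤ a}).toReal ≤ B := htoReal
    _ ≤ Real.exp (-ε ^ 2 * d ^ 2 / (2 * (f : ℝ))) := hBle
    _ < 2 * Real.exp (-ε ^ 2 * d ^ 2 / (2 * (f : ℝ))) := by
        nlinarith [Real.exp_pos (-ε ^ 2 * d ^ 2 / (2 * (f : ℝ)))]
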